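/- Let K0 : Ω* × Ω* → ℂ be a positive definite kernel that is holomorphic in the first variable and anti-holomorphic in the second, and let K1 be another such positive definite kernel. Then the 2×2 matrix-valued kernel K_Γ(z,w) = [[K0(z,w), ∂_w̄ K0(z,w)],[∂_z K0(z,w), ∂_z ∂_w̄ K0(z,w) + K1(z,w)]] is positive definite. -/

import Mathlib

open scoped InnerProductSpace

/-- A scalar kernel is positive definite on `Ω` if all its Gram sums are nonnegative reals. -/
def ScalarPosDefKernel (Ω : Set ℂ) (K : ℂ → ℂ → ℂ) : Prop :=
  ∀ (m : ℕ) (z : Fin m → ℂ), (∀ i, z i ∈ Ω) → ∀ c : Fin m → ℂ,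
    0 ≤ (∑ i, ∑ j, (starRingEnd ℂ) (c i) * K (z i) (z j) * c j).re ∧
    (∑ i, ∑ j, (starRingEnd ℂ) (c i) * K (z i) (z j) * c j).im = 0

/-- A `2 × 2` matrix-valued kernel is positive definite on `Ω` if all its Gram sums
against vectors in `ℂ²` are nonnegative reals. -/
def MatrixPosDefKernel (Ω : Set ℂ) (K : ℂ → ℂ → Matrix (Fin 2) (Fin 2) ℂ) : Prop :=
  ∀ (m : ℕ) (z : Fin m → ℂ), (∀ i, z i ∈ Ω) → ∀ v : Fin m → Fin 2 → ℂ,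
    0 ≤ (∑ i, ∑ j, ∑ a, ∑ b, (starRingEnd ℂ) (v i a) * K (z i) (z j) a b * v j b).re ∧
    (∑ i, ∑ j, ∑ a, ∑ b, (starRingEnd ℂ) (v i a) * K (z i) (z j) a b * v j b).im = 0

/-- The holomorphic derivative in the first variable. -/
noncomputable def Dz (K : ℂ → ℂ → ℂ) (z w : ℂ) : ℂ := deriv (fun u => K u w) z

/-- The anti-holomorphic derivative in the second variable. -/
noncomputable def Dwbar (K : ℂ → ℂ → ℂ) (z w : ℂ) : ℂ :=
  (starRingEnd ℂ) (deriv (fun u => (starRingEnd ℂ) (K z u)) w)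

/-! Since `K0 z w = ⟪γ0 w, γ0 z⟫`, differentiating under the inner product shows that
`K_Γ z w a b = ⟪Γ0 w b, Γ0 z a⟫ + ⟪Γ1 w b, Γ1 z a⟫` with `Γ0 = (γ0, γ0')` and `Γ1 = (0, γ1)`.
Each summand is a Gram kernel, whose Gram sum against `v` is `‖∑ j, ∑ b, conj (v j b) • Γ (z j) b‖²`. -/

open Complex ComplexConjugate Filter Topology

section Kernels

variable {H : Type*} [NormedAddCommGroup H] [InnerProductSpace ℂ H] {Ω : Set ℂ}

noncomputable def gramKernel (Γ : ℂ → Fin 2 → H) (z w : ℂ) : Matrix (Fin 2) (Fin 2) ℂ :=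
  Matrix.of fun a b => ⟪Γ w b, Γ z a⟫_ℂ

theorem MatrixPosDefKernel.of_eqOn {K L : ℂ → ℂ → Matrix (Fin 2) (Fin 2) ℂ}
    (hL : MatrixPosDefKernel Ω L) (h : ∀ z ∈ Ω, ∀ w ∈ Ω, K z w = L z w) :
    MatrixPosDefKernel Ω K := by
  intro m z hz v
  simpa only [h _ (hz _) _ (hz _)] using hL m z hz v

theorem MatrixPosDefKernel.add {K L : ℂ → ℂ → Matrix (Fin 2) (Fin 2) ℂ}
    (hK : MatrixPosDefKernel Ω K) (hL : MatrixPosDefKernel Ω L) :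
    MatrixPosDefKernel Ω (K + L) := by
  intro m z hz v
  obtain ⟨hK_re, hK_im⟩ := hK m z hz v
  obtain ⟨hL_re, hL_im⟩ := hL m z hz v
  simp only [Pi.add_apply, Matrix.add_apply, mul_add, add_mul, Finset.sum_add_distrib, add_re,
    add_im]
  exact ⟨add_nonneg hK_re hL_re, by rw [hK_im, hL_im, add_zero]⟩

theorem gramKernel_sum_eq_inner_self {m : ℕ} (Γ : ℂ → Fin 2 → H) (z : Fin m → ℂ)
    (v : Fin m → Fin 2 → ℂ) :
    ∑ i, ∑ j, ∑ a, ∑ b, conj (v i a) * gramKernel Γ (z i) (z j) a b * v j b =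
      ⟪∑ j, ∑ b, conj (v j b) • Γ (z j) b, ∑ i, ∑ a, conj (v i a) • Γ (z i) a⟫_ℂ := by
  simp only [gramKernel, Matrix.of_apply, sum_inner, inner_sum, inner_smul_left, inner_smul_right,
    conj_conj, Finset.mul_sum]
  refine Finset.sum_congr rfl fun i _ => Finset.sum_comm.trans ?_
  simp only [mul_comm, mul_assoc]

theorem gramKernel_posDef (Γ : ℂ → Fin 2 → H) : MatrixPosDefKernel Ω (gramKernel Γ) := by
  intro m z _ v
  rw [gramKernel_sum_eq_inner_self]
  exact ⟨inner_self_nonneg (𝕜 := ℂ), inner_self_im (𝕜 := ℂ) _⟩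

end Kernels

section Derivatives

variable {H : Type*} [NormedAddCommGroup H] [InnerProductSpace ℂ H]

theorem Dz_eq_inner_deriv {K : ℂ → ℂ → ℂ} {γ : ℂ → H} {x : H} {z w : ℂ}
    (hγ : DifferentiableAt ℂ γ z) (hK : (fun u => K u w) =ᶠ[𝓝 z] fun u => ⟪x, γ u⟫_ℂ) :
    Dz K z w = ⟪x, deriv γ z⟫_ℂ := by
  rw [Dz, hK.deriv_eq]
  exact ((innerSL ℂ x).hasFDerivAt.comp_hasDerivAt z hγ.hasDerivAt).deriv

theorem Dwbar_eq_inner_deriv {K : ℂ → ℂ → ℂ} {γ : ℂ → H} {y : H} {z w : ℂ}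
    (hγ : DifferentiableAt ℂ γ w) (hK : (fun u => K z u) =ᶠ[𝓝 w] fun u => ⟪γ u, y⟫_ℂ) :
    Dwbar K z w = ⟪deriv γ w, y⟫_ℂ := by
  have hK_conj : (fun u => conj (K z u)) =ᶠ[𝓝 w] fun u => ⟪y, γ u⟫_ℂ :=
    hK.mono fun u hu => (congrArg conj hu).trans (inner_conj_symm _ _)
  change conj (Dz (fun u v => conj (K v u)) w z) = _
  rw [Dz_eq_inner_deriv hγ hK_conj, inner_conj_symm]

variable {Ω : Set ℂ} {K : ℂ → ℂ → ℂ} {γ : ℂ → H} {z w : ℂ}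

theorem Dz_eq_of_eqOn_inner (hΩ : IsOpen Ω) (hγ : DifferentiableOn ℂ γ Ω)
    (hK : ∀ z ∈ Ω, ∀ w ∈ Ω, K z w = ⟪γ w, γ z⟫_ℂ) (hz : z ∈ Ω) (hw : w ∈ Ω) :
    Dz K z w = ⟪γ w, deriv γ z⟫_ℂ :=
  Dz_eq_inner_deriv (hγ.differentiableAt (hΩ.mem_nhds hz))
    (eventually_of_mem (hΩ.mem_nhds hz) fun u hu => hK u hu w hw)

theorem Dwbar_eq_of_eqOn_inner (hΩ : IsOpen Ω) (hγ : DifferentiableOn ℂ γ Ω)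
    (hK : ∀ z ∈ Ω, ∀ w ∈ Ω, K z w = ⟪γ w, γ z⟫_ℂ) (hz : z ∈ Ω) (hw : w ∈ Ω) :
    Dwbar K z w = ⟪deriv γ w, γ z⟫_ℂ :=
  Dwbar_eq_inner_deriv (hγ.differentiableAt (hΩ.mem_nhds hw))
    (eventually_of_mem (hΩ.mem_nhds hw) fun u hu => hK z hz u hu)

theorem Dz_Dwbar_eq_of_eqOn_inner (hΩ : IsOpen Ω) (hγ : DifferentiableOn ℂ γ Ω)
    (hK : ∀ z ∈ Ω, ∀ w ∈ Ω, K z w = ⟪γ w, γ z⟫_ℂ) (hz : z ∈ Ω) (hw : w ∈ Ω) :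
    Dz (Dwbar K) z w = ⟪deriv γ w, deriv γ z⟫_ℂ :=
  Dz_eq_inner_deriv (hγ.differentiableAt (hΩ.mem_nhds hz))
    (eventually_of_mem (hΩ.mem_nhds hz) fun _ hu => Dwbar_eq_of_eqOn_inner hΩ hγ hK hu hw)

end Derivatives

theorem matrix_kernel_posdef_general
    {H : Type*} [NormedAddCommGroup H] [InnerProductSpace ℂ H]
    (Ω : Set ℂ) (hΩ : IsOpen Ω)
    (K0 K1 : ℂ → ℂ → ℂ)
    (γ0 γ1 : ℂ → H)
    (hγ0 : DifferentiableOn ℂ γ0 Ω)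
    (hrep0 : ∀ z ∈ Ω, ∀ w ∈ Ω, K0 z w = ⟪γ0 w, γ0 z⟫_ℂ)
    (hrep1 : ∀ z ∈ Ω, ∀ w ∈ Ω, K1 z w = ⟪γ1 w, γ1 z⟫_ℂ)
    (KΓ : ℂ → ℂ → Matrix (Fin 2) (Fin 2) ℂ)
    (hKΓ : ∀ z ∈ Ω, ∀ w ∈ Ω, KΓ z w =
      !![K0 z w, Dwbar K0 z w;
         Dz K0 z w, Dz (fun u v => Dwbar K0 u v) z w + K1 z w]) :
    MatrixPosDefKernel Ω KΓ := by
  refine ((gramKernel_posDef fun z => ![γ0 z, deriv γ0 z]).add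
    (gramKernel_posDef fun z => ![0, γ1 z])).of_eqOn fun z hz w hw => ?_
  rw [hKΓ z hz w hw, Dz_eq_of_eqOn_inner hΩ hγ0 hrep0 hz hw,
    Dwbar_eq_of_eqOn_inner hΩ hγ0 hrep0 hz hw, Dz_Dwbar_eq_of_eqOn_inner hΩ hγ0 hrep0 hz hw,
    hrep0 z hz w hw, hrep1 z hz w hw]
  ext a b
  fin_cases a <;> fin_cases b <;> simp [gramKernel]

/-- If `K0` and `K1` are positive definite sesqui-holomorphic kernels on `Ω*`, induced
by holomorphic Hilbert-space-valued maps `γ0, γ1`, then the matrix kernel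
`K_Γ(z,w) = [[K0, ∂_w̄ K0],[∂_z K0, ∂_z∂_w̄ K0 + K1]]` is positive definite. -/
theorem matrix_kernel_posdef
    {H : Type*} [NormedAddCommGroup H] [InnerProductSpace ℂ H] [CompleteSpace H]
    (Ω : Set ℂ) (hΩ : IsOpen Ω)
    (K0 K1 : ℂ → ℂ → ℂ)
    (hK0 : ScalarPosDefKernel Ω K0) (hK1 : ScalarPosDefKernel Ω K1)
    (γ0 γ1 : ℂ → H)
    (hγ0 : DifferentiableOn ℂ γ0 Ω) (hγ1 : DifferentiableOn ℂ γ1 Ω)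
    (hrep0 : ∀ z ∈ Ω, ∀ w ∈ Ω, K0 z w = ⟪γ0 w, γ0 z⟫_ℂ)
    (hrep1 : ∀ z ∈ Ω, ∀ w ∈ Ω, K1 z w = ⟪γ1 w, γ1 z⟫_ℂ)
    (KΓ : ℂ → ℂ → Matrix (Fin 2) (Fin 2) ℂ)
    (hKΓ : ∀ z ∈ Ω, ∀ w ∈ Ω, KΓ z w =
      !![K0 z w, Dwbar K0 z w;
         Dz K0 z w, Dz (fun u v => Dwbar K0 u v) z w + K1 z w]) :
    MatrixPosDefKernel Ω KΓ :=
  matrix_kernel_posdef_general Ω hΩ K0 K1 γ0 γ1 hγ0 hrep0 hrep1 KΓ hKΓ
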